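/- arXiv:2603.25983 — 2 statements merged into one kernel-verified Lean document; each statement's English description precedes it below -/
import Mathlib

section
/- Let x_0 ∈ ℝ^n and r̄_0 = A x_0 − b. Let (x_k) be a full NGMRES sequence starting from x_0: for each k, x_{k+1} = q(x_k) + Σ_{i=0}^{k} β_i^{(k)} (q(x_k) − x_{k−i}) where β^{(k)} ∈ ℝ^{k+1} minimizes ‖A x_{k+1} − b‖ over all coefficient vectors. Let (x_k^{Gr}) be a right-preconditioned GMRES sequence with x_0^{Gr} = x_0: for each k, x_k^{Gr} ∈ x_0 + P · K_k(AP, r̄_0) and ‖A x_k^{Gr} − b‖ ≤ ‖A y − b‖ for every y ∈ x_0 + P · K_k(AP, r̄_0); write r̄_k^{Gr} = A x_k^{Gr} − b. Assume that for some k* ∈ ℤ^+, r̄_{k*−1}^{Gr} ≠ 0 and ‖r̄_k^{Gr}‖ < ‖r̄_{k−1}^{Gr}‖ for all integers k with 0 < k < k*. Then x_k = x_k^{Gr} for all 0 ≤ k ≤ k*. -/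
open scoped RealInnerProductSpace

/-- Matrix-vector multiplication on Euclidean space. -/
noncomputable def mulV {n : ℕ} (M : Matrix (Fin n) (Fin n) ℝ)
    (v : EuclideanSpace ℝ (Fin n)) : EuclideanSpace ℝ (Fin n) :=
  Matrix.toEuclideanLin M v

/-- Krylov subspace `K_k(M, v) = span {v, M v, …, M^(k-1) v}`. -/
noncomputable def Krylov {n : ℕ} (M : Matrix (Fin n) (Fin n) ℝ)
    (v : EuclideanSpace ℝ (Fin n)) (k : ℕ) : Submodule ℝ (EuclideanSpace ℝ (Fin n)) :=
  Submodule.span ℝ (Set.range fun i : Fin k => mulV (M ^ (i : ℕ)) v)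

/-!
Write iterates as `x₀ + P z` and put `r₀ = A x₀ - b`, so that the residual of `x₀ + P z` is
`r₀ + A P z`; GMRES picks `z_k ∈ K_k(AP, r₀)` minimising its norm. If the NGMRES iterates
`x_0, …, x_m` agree with GMRES, the NGMRES update searches over `w + span {w - z_j : j ≤ m}`
with `w = z_m - (r₀ + A P z_m)`, i.e. (as `z_0 = 0`) over `span {w, z_1, …, z_m}`. Strict decrease
of the GMRES residuals makes every `z_{j+1}` a new Krylov direction, so `K_m = span {z_1, …, z_m}`
and `K_{m+1} = K_m + span {r₀ + A P z_m}`: the NGMRES search space is exactly `K_{m+1}`. Both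
methods therefore minimise the same residual norm over `K_{m+1}`, and since `AP` is injective and
the Euclidean norm strictly convex, the minimiser is unique.
-/

theorem Submodule.sup_span_singleton_eq_of_mem_of_notMem {K V : Type*} [DivisionRing K]
    [AddCommGroup V] [Module K V] {S : Submodule K V} {x y : V}
    (hx : x ∈ S ⊔ K ∙ y) (hxS : x ∉ S) : S ⊔ K ∙ y = S ⊔ K ∙ x := by
  have hspan : ∀ u, span K (insert u (S : Set V)) = S ⊔ K ∙ u := fun u => by
    rw [span_insert, span_eq, sup_comm]
  have hy : y ∈ S ⊔ K ∙ x := by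
    rw [← hspan] at hx ⊢
    exact mem_span_insert_exchange hx (by rwa [span_eq])
  exact le_antisymm (sup_le le_sup_left (span_singleton_le_iff_mem _ _ |>.2 hy))
    (sup_le le_sup_left (span_singleton_le_iff_mem _ _ |>.2 hx))

theorem eq_of_isMinOn_norm_add_linearMap {E F : Type*} [AddCommGroup E] [Module ℝ E]
    [NormedAddCommGroup F] [NormedSpace ℝ F] [StrictConvexSpace ℝ F] {s : Set E}
    (hs : Convex ℝ s) {T : E →ₗ[ℝ] F} (hT : Function.Injective T) {u : F} {y₁ y₂ : E}
    (h₁ : y₁ ∈ s) (h₂ : y₂ ∈ s) (hm₁ : IsMinOn (fun y => ‖u + T y‖) s y₁)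
    (hm₂ : IsMinOn (fun y => ‖u + T y‖) s y₂) : y₁ = y₂ := by
  by_contra hne
  have heq : ‖u + T y₁‖ = ‖u + T y₂‖ := le_antisymm (hm₁ h₂) (hm₂ h₁)
  have hmid : (1 / 2 : ℝ) • y₁ + (1 / 2 : ℝ) • y₂ ∈ s :=
    hs h₁ h₂ (by norm_num) (by norm_num) (by norm_num)
  have hle : ‖u + T y₁‖ ≤ ‖u + T ((1 / 2 : ℝ) • y₁ + (1 / 2 : ℝ) • y₂)‖ := hm₁ hmid
  have hval : u + T ((1 / 2 : ℝ) • y₁ + (1 / 2 : ℝ) • y₂) =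
      (1 / 2 : ℝ) • ((u + T y₁) + (u + T y₂)) := by
    simp only [map_add, map_smul]
    module
  rw [hval] at hle
  exact hle.not_gt ((norm_midpoint_lt_iff heq).2 fun h => hne (hT (add_left_cancel h)))

section Krylov

variable {n : ℕ} (M : Matrix (Fin n) (Fin n) ℝ)

theorem mulV_eq_toEuclideanLin : mulV M = Matrix.toEuclideanLin M := rfl

theorem mulV_mul (N : Matrix (Fin n) (Fin n) ℝ) (v : EuclideanSpace ℝ (Fin n)) :
    mulV (M * N) v = mulV M (mulV N v) := by
  simp [mulV]

theorem mulV_one (v : EuclideanSpace ℝ (Fin n)) : mulV 1 v = v := by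
  simp [mulV]

variable {M} in
theorem mulV_injective (hM : IsUnit M.det) : Function.Injective (mulV M) :=
  Function.LeftInverse.injective (g := mulV M⁻¹) fun v => by
    rw [← mulV_mul, Matrix.nonsing_inv_mul M hM, mulV_one]

variable (v : EuclideanSpace ℝ (Fin n))

theorem Krylov_zero : Krylov M v 0 = ⊥ := by
  simp [Krylov, Set.range_eq_empty]

theorem Krylov_succ (k : ℕ) :
    Krylov M v (k + 1) = Krylov M v k ⊔ ℝ ∙ mulV (M ^ k) v := by
  rw [Krylov, Krylov, ← Submodule.span_union, Set.union_singleton]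
  congr 1
  ext
  simp [Fin.exists_fin_succ', or_comm, eq_comm]

theorem Krylov_succ' (k : ℕ) :
    Krylov M v (k + 1) = (ℝ ∙ v) ⊔ (Krylov M v k).map (Matrix.toEuclideanLin M) := by
  rw [Krylov, Krylov, Submodule.map_span, ← Submodule.span_insert]
  congr 1
  ext
  simp [Fin.exists_fin_succ, pow_succ', mulV_eq_toEuclideanLin, eq_comm]

theorem Krylov_mono : Monotone (Krylov M v) :=
  monotone_nat_of_le_succ fun k => (Krylov_succ M v k).ge.trans' le_sup_left

theorem self_mem_Krylov {k : ℕ} (hk : 0 < k) : v ∈ Krylov M v k := by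
  obtain ⟨k, rfl⟩ := Nat.exists_eq_add_of_lt hk
  rw [zero_add, Krylov_succ']
  exact Submodule.mem_sup_left (Submodule.mem_span_singleton_self v)

theorem map_Krylov_le (k : ℕ) :
    (Krylov M v k).map (Matrix.toEuclideanLin M) ≤ Krylov M v (k + 1) :=
  (Krylov_succ' M v k).ge.trans' le_sup_right

variable {M v}

theorem Krylov_succ_eq_sup_of_notMem {k : ℕ} {z : EuclideanSpace ℝ (Fin n)}
    (hz : z ∈ Krylov M v (k + 1)) (hzk : z ∉ Krylov M v k) :
    Krylov M v (k + 1) = Krylov M v k ⊔ ℝ ∙ z := by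
  rw [Krylov_succ] at hz ⊢
  exact Submodule.sup_span_singleton_eq_of_mem_of_notMem hz hzk

theorem Krylov_le_of_forall_mem {z : ℕ → EuclideanSpace ℝ (Fin n)} {m : ℕ}
    (hz : ∀ j, z j ∈ Krylov M v j) (hnew : ∀ j < m, z (j + 1) ∉ Krylov M v j)
    {S : Submodule ℝ (EuclideanSpace ℝ (Fin n))} (hS : ∀ j ≤ m, z j ∈ S) :
    Krylov M v m ≤ S := by
  induction m with
  | zero => simp [Krylov_zero]
  | succ m ih =>
    rw [Krylov_succ_eq_sup_of_notMem (hz _) (hnew m m.lt_succ_self)]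
    refine sup_le (ih (fun j hj => hnew j (hj.trans m.lt_succ_self)) fun j hj => ?_)
      ((Submodule.span_singleton_le_iff_mem _ _).2 (hS _ le_rfl))
    exact hS j (Nat.le_succ_of_le hj)

theorem Krylov_succ_le_of_forall_mem {z : ℕ → EuclideanSpace ℝ (Fin n)} {m : ℕ}
    (hz : ∀ j, z j ∈ Krylov M v j) (hnew : ∀ j < m, z (j + 1) ∉ Krylov M v j)
    {S : Submodule ℝ (EuclideanSpace ℝ (Fin n))} (hS : ∀ j ≤ m, z j ∈ S)
    (hres : v + mulV M (z m) ∈ S) : Krylov M v (m + 1) ≤ S := by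
  rw [Krylov_succ', sup_le_iff, Submodule.span_singleton_le_iff_mem]
  cases m with
  | zero =>
    have hz0 : z 0 = 0 := by simpa [Krylov_zero] using hz 0
    rw [hz0, mulV_eq_toEuclideanLin, map_zero, add_zero] at hres
    exact ⟨hres, by simp [Krylov_zero]⟩
  | succ p =>
    have hK := Krylov_le_of_forall_mem hz hnew hS
    have hv : v ∈ S := hK (self_mem_Krylov M v p.succ_pos)
    refine ⟨hv, ?_⟩
    rw [Krylov_succ_eq_sup_of_notMem (hz _) (hnew p p.lt_succ_self), Submodule.map_sup,
      Submodule.map_span, Set.image_singleton]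
    refine sup_le ((map_Krylov_le M v p).trans hK)
      ((Submodule.span_singleton_le_iff_mem _ _).2 ?_)
    simpa [mulV_eq_toEuclideanLin] using S.sub_mem hres hv

theorem range_ngmres_update_eq_Krylov {z : ℕ → EuclideanSpace ℝ (Fin n)} {m : ℕ}
    (hz : ∀ j, z j ∈ Krylov M v j) (hnew : ∀ j < m, z (j + 1) ∉ Krylov M v j)
    {w : EuclideanSpace ℝ (Fin n)} (hw : w = z m - (v + mulV M (z m))) :
    Set.range (fun c : ℕ → ℝ => w + ∑ i ∈ Finset.range (m + 1), c i • (w - z (m - i))) =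
      Krylov M v (m + 1) := by
  ext y
  constructor
  · rintro ⟨c, rfl⟩
    have hK : ∀ j ≤ m, z j ∈ Krylov M v (m + 1) := fun j hj =>
      Krylov_mono M v (Nat.le_succ_of_le hj) (hz j)
    have hwK : w ∈ Krylov M v (m + 1) := hw ▸ sub_mem (hK m le_rfl)
      (add_mem (self_mem_Krylov M v m.succ_pos) (map_Krylov_le M v m ⟨z m, hz m, rfl⟩))
    exact add_mem hwK (Submodule.sum_mem _ fun i _ =>
      Submodule.smul_mem _ _ (sub_mem hwK (hK _ (Nat.sub_le m i))))
  · intro hy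
    set D := Submodule.span ℝ ((fun i => w - z (m - i)) '' ↑(Finset.range (m + 1)))
    have hd : ∀ j ≤ m, w - z j ∈ D := fun j hj =>
      Submodule.subset_span ⟨m - j, by simp, by simp [Nat.sub_sub_self hj]⟩
    have hz0 : z 0 = 0 := by simpa [Krylov_zero] using hz 0
    have hwD : w ∈ D := by simpa [hz0] using hd 0 (Nat.zero_le m)
    have hzD : ∀ j ≤ m, z j ∈ D := fun j hj => by simpa using D.sub_mem hwD (hd j hj)
    have hresD : v + mulV M (z m) ∈ D := by
      rw [show v + mulV M (z m) = z m - w by rw [hw]; abel]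
      exact D.sub_mem (hzD m le_rfl) hwD
    obtain ⟨c, hc⟩ := (Submodule.mem_span_image_finset_iff_exists_fun' ℝ).1
      (D.sub_mem (Krylov_succ_le_of_forall_mem hz hnew hzD hresD hy) hwD)
    exact ⟨c, by simp only [hc, add_sub_cancel]⟩

end Krylov

section NGMRES

variable {n : ℕ} {A P : Matrix (Fin n) (Fin n) ℝ} {b : EuclideanSpace ℝ (Fin n)}

theorem mulV_add_mulV_sub (x₀ y : EuclideanSpace ℝ (Fin n)) :
    mulV A (x₀ + mulV P y) - b = (mulV A x₀ - b) + mulV (A * P) y := by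
  simp only [mulV_mul, mulV_eq_toEuclideanLin, map_add]
  abel

theorem ngmres_update_eq {q : EuclideanSpace ℝ (Fin n) → EuclideanSpace ℝ (Fin n)}
    (hq : ∀ y, q y = y + mulV P (b - mulV A y)) {x z : ℕ → EuclideanSpace ℝ (Fin n)}
    {x₀ w : EuclideanSpace ℝ (Fin n)} {m : ℕ} (hx : ∀ j ≤ m, x j = x₀ + mulV P (z j))
    (hw : w = z m - ((mulV A x₀ - b) + mulV (A * P) (z m))) (c : ℕ → ℝ) :
    q (x m) + ∑ i ∈ Finset.range (m + 1), c i • (q (x m) - x (m - i)) =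
      x₀ + mulV P (w + ∑ i ∈ Finset.range (m + 1), c i • (w - z (m - i))) := by
  have hqx : q (x m) = x₀ + mulV P w := by
    rw [hq, hx m le_rfl, hw, ← mulV_add_mulV_sub]
    simp only [mulV_eq_toEuclideanLin, map_sub]
    abel
  rw [hqx, Finset.sum_congr rfl fun i _ => by rw [hx (m - i) (Nat.sub_le m i)]]
  simp only [mulV_eq_toEuclideanLin, map_add, map_sum, map_smul, map_sub, add_sub_add_left_eq_sub]
  abel

theorem ngmres_succ_eq_of_isMinOn (hAP : IsUnit (A * P).det)
    {q : EuclideanSpace ℝ (Fin n) → EuclideanSpace ℝ (Fin n)}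
    (hq : ∀ y, q y = y + mulV P (b - mulV A y)) {x z : ℕ → EuclideanSpace ℝ (Fin n)}
    {x₀ : EuclideanSpace ℝ (Fin n)} {m : ℕ} {β : ℕ → ℝ}
    (hz : ∀ j, z j ∈ Krylov (A * P) (mulV A x₀ - b) j)
    (hnew : ∀ j < m, z (j + 1) ∉ Krylov (A * P) (mulV A x₀ - b) j)
    (hmin : IsMinOn (fun y => ‖(mulV A x₀ - b) + mulV (A * P) y‖)
      (Krylov (A * P) (mulV A x₀ - b) (m + 1)) (z (m + 1)))
    (hx : ∀ j ≤ m, x j = x₀ + mulV P (z j))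
    (hopt : ∀ c : ℕ → ℝ,
      ‖mulV A (q (x m) + ∑ i ∈ Finset.range (m + 1), β i • (q (x m) - x (m - i))) - b‖ ≤
      ‖mulV A (q (x m) + ∑ i ∈ Finset.range (m + 1), c i • (q (x m) - x (m - i))) - b‖) :
    q (x m) + ∑ i ∈ Finset.range (m + 1), β i • (q (x m) - x (m - i)) =
      x₀ + mulV P (z (m + 1)) := by
  set w := z m - ((mulV A x₀ - b) + mulV (A * P) (z m)) with hw
  have hupdate := ngmres_update_eq hq hx hw
  have hrange := range_ngmres_update_eq_Krylov hz hnew hw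
  set z' := w + ∑ i ∈ Finset.range (m + 1), β i • (w - z (m - i))
  have hmem : z' ∈ Krylov (A * P) (mulV A x₀ - b) (m + 1) := by
    rw [← SetLike.mem_coe, ← hrange]
    exact ⟨β, rfl⟩
  have hmin' : IsMinOn (fun y => ‖(mulV A x₀ - b) + mulV (A * P) y‖)
      (Krylov (A * P) (mulV A x₀ - b) (m + 1)) z' := by
    refine isMinOn_iff.2 fun y hy => ?_
    rw [← hrange] at hy
    obtain ⟨c, rfl⟩ := hy
    simpa only [hupdate, mulV_add_mulV_sub] using hopt c
  rw [hupdate, ← eq_of_isMinOn_norm_add_linearMap (Submodule.convex _) (mulV_injective hAP) hmem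
    (hz _) hmin' hmin]

end NGMRES

theorem stmt_7_general {n : ℕ} (A P : Matrix (Fin n) (Fin n) ℝ)
    (hA : IsUnit A.det) (hP : IsUnit P.det)
    (b : EuclideanSpace ℝ (Fin n))
    (q : EuclideanSpace ℝ (Fin n) → EuclideanSpace ℝ (Fin n))
    (hq : ∀ y, q y = y + mulV P (b - mulV A y))
    (x xG : ℕ → EuclideanSpace ℝ (Fin n))
    (rb0 : EuclideanSpace ℝ (Fin n)) (hrb0 : rb0 = mulV A (x 0) - b)
    -- full NGMRES sequence
    (β : ℕ → ℕ → ℝ)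
    (hstep : ∀ k, x (k + 1) =
      q (x k) + ∑ i ∈ Finset.range (k + 1), β k i • (q (x k) - x (k - i)))
    (hopt : ∀ k, ∀ c : ℕ → ℝ,
      ‖mulV A (x (k + 1)) - b‖ ≤
      ‖mulV A (q (x k) + ∑ i ∈ Finset.range (k + 1), c i • (q (x k) - x (k - i))) - b‖)
    -- right-preconditioned GMRES sequence
    (hG0 : xG 0 = x 0)
    (hGmem : ∀ k, ∃ z ∈ Krylov (A * P) rb0 k, xG k = x 0 + mulV P z)
    (hGopt : ∀ k, ∀ z ∈ Krylov (A * P) rb0 k,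
      ‖mulV A (xG k) - b‖ ≤ ‖mulV A (x 0 + mulV P z) - b‖)
    (kstar : ℕ)
    (hdec : ∀ k, 0 < k → k < kstar →
      ‖mulV A (xG k) - b‖ < ‖mulV A (xG (k - 1)) - b‖) :
    ∀ k ≤ kstar, x k = xG k := by
  subst hrb0
  choose z hzK hxG using hGmem
  have hmin : ∀ k, IsMinOn (fun y => ‖(mulV A (x 0) - b) + mulV (A * P) y‖)
      (Krylov (A * P) (mulV A (x 0) - b) k) (z k) := fun k => isMinOn_iff.2 fun y hy => by
    simpa only [hxG, mulV_add_mulV_sub] using hGopt k y hy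
  have hnew : ∀ j, j + 1 < kstar → z (j + 1) ∉ Krylov (A * P) (mulV A (x 0) - b) j :=
    fun j hj hmem => by
      have hlt := hdec (j + 1) j.succ_pos hj
      simp only [hxG, mulV_add_mulV_sub, Nat.add_sub_cancel] at hlt
      exact (hmin j hmem).not_gt hlt
  intro k
  induction k using Nat.strong_induction_on with
  | _ k ih =>
    intro hk
    cases k with
    | zero => exact hG0.symm
    | succ m =>
      rw [hstep, hxG, ngmres_succ_eq_of_isMinOn (by rw [Matrix.det_mul]; exact hA.mul hP) hq hzK
        (fun j hj => hnew j (by omega)) (hmin _)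
        (fun j hj => (ih j (by omega) (by omega)).trans (hxG j)) (fun c => hstep m ▸ hopt m c)]

/-- full NGMRES on preconditioned Richardson equals right-preconditioned GMRES. -/
theorem stmt_7 {n : ℕ} (A P : Matrix (Fin n) (Fin n) ℝ)
    (hA : IsUnit A.det) (hP : IsUnit P.det)
    (b : EuclideanSpace ℝ (Fin n))
    (q : EuclideanSpace ℝ (Fin n) → EuclideanSpace ℝ (Fin n))
    (hq : ∀ y, q y = y + mulV P (b - mulV A y))
    (x xG : ℕ → EuclideanSpace ℝ (Fin n))
    (rb0 : EuclideanSpace ℝ (Fin n)) (hrb0 : rb0 = mulV A (x 0) - b)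
    -- full NGMRES sequence
    (β : ℕ → ℕ → ℝ)
    (hstep : ∀ k, x (k + 1) =
      q (x k) + ∑ i ∈ Finset.range (k + 1), β k i • (q (x k) - x (k - i)))
    (hopt : ∀ k, ∀ c : ℕ → ℝ,
      ‖mulV A (x (k + 1)) - b‖ ≤
      ‖mulV A (q (x k) + ∑ i ∈ Finset.range (k + 1), c i • (q (x k) - x (k - i))) - b‖)
    -- right-preconditioned GMRES sequence
    (hG0 : xG 0 = x 0)
    (hGmem : ∀ k, ∃ z ∈ Krylov (A * P) rb0 k, xG k = x 0 + mulV P z)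
    (hGopt : ∀ k, ∀ z ∈ Krylov (A * P) rb0 k,
      ‖mulV A (xG k) - b‖ ≤ ‖mulV A (x 0 + mulV P z) - b‖)
    (kstar : ℕ) (hkstar : 0 < kstar)
    (hne : mulV A (xG (kstar - 1)) - b ≠ 0)
    (hdec : ∀ k, 0 < k → k < kstar →
      ‖mulV A (xG k) - b‖ < ‖mulV A (xG (k - 1)) - b‖) :
    ∀ k ≤ kstar, x k = xG k :=
  stmt_7_general A P hA hP b q hq x xG rb0 hrb0 β hstep hopt hG0 hGmem hGopt kstar hdec
end

section
/- Suppose H = I − A P satisfies ‖H‖ < 1 in the operator 2-norm. Let α ∈ ℝ^{m_k} minimize ‖(A q(x_k) − b) + Σ_{i=1}^{m_k} α_i ((A q(x_k) − b) − (A q(x_{k−i}) − b))‖ over all α ∈ ℝ^{m_k} (the AAg least-squares problem), define x_{k+1} = q(x_k) + Σ_{i=1}^{m_k} α_i (q(x_k) − q(x_{k−i})) and r̄_{k+1} = A x_{k+1} − b, and assume r̄_k ≠ 0. Then ‖r̄_{k+1}‖ < ‖r̄_k‖. -/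
/-!
The Richardson step maps classical residuals by `H`: `A q(y) - b = H (A y - b)`. Since `x ↦ A x - b`
is affine, `r̄_{k+1}` is exactly the least-squares objective evaluated at the optimal `α`, so it is
at most the objective at `α = 0`, which is `‖H r̄_k‖ ≤ ‖H‖ ‖r̄_k‖ < ‖r̄_k‖`.
-/

open scoped RealInnerProductSpace

open scoped Matrix.Norms.L2Operator

theorem LinearMap.map_add_sum_smul_sub_sub {R M N ι : Type*} [Ring R] [AddCommGroup M]
    [AddCommGroup N] [Module R M] [Module R N] (f : M →ₗ[R] N) (b : N) (s : Finset ι)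
    (α : ι → R) (u : M) (v : ι → M) :
    f (u + ∑ i ∈ s, α i • (u - v i)) - b =
      (f u - b) + ∑ i ∈ s, α i • ((f u - b) - (f (v i) - b)) := by
  simp only [map_add, map_sum, map_smul, map_sub, sub_sub_sub_cancel_right]
  abel

section mulV

variable {n : ℕ}

theorem mulV_richardson_sub (A P : Matrix (Fin n) (Fin n) ℝ) (b y : EuclideanSpace ℝ (Fin n)) :
    mulV A (y + mulV P (b - mulV A y)) - b = mulV (1 - A * P) (mulV A y - b) := by
  simp only [mulV, map_sub, map_add, Matrix.toLpLin_mul_same, Matrix.toLpLin_one,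
    LinearMap.sub_apply, LinearMap.comp_apply, LinearMap.id_apply]
  abel

theorem norm_mulV_lt_of_norm_lt_one {H : Matrix (Fin n) (Fin n) ℝ} (hH : ‖H‖ < 1)
    {v : EuclideanSpace ℝ (Fin n)} (hv : v ≠ 0) : ‖mulV H v‖ < ‖v‖ :=
  calc ‖mulV H v‖ ≤ ‖H‖ * ‖v‖ := H.l2_opNorm_mulVec v
    _ < ‖v‖ := mul_lt_of_lt_one_left (norm_pos_iff.mpr hv) hH

end mulV

theorem stmt_13_general {n : ℕ} (A P : Matrix (Fin n) (Fin n) ℝ)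
    (b : EuclideanSpace ℝ (Fin n))
    (q rb : EuclideanSpace ℝ (Fin n) → EuclideanSpace ℝ (Fin n))
    (hq : ∀ y, q y = y + mulV P (b - mulV A y))
    (hrb : ∀ y, rb y = mulV A y - b)
    (H : Matrix (Fin n) (Fin n) ℝ) (hH : H = 1 - A * P)
    (hHnorm : ‖H‖ < 1)
    (k m : ℕ)
    (x : ℕ → EuclideanSpace ℝ (Fin n))
    (α : ℕ → ℝ)
    (hopt : ∀ a : ℕ → ℝ,
      ‖(mulV A (q (x k)) - b) + ∑ i ∈ Finset.Icc 1 m,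
          α i • ((mulV A (q (x k)) - b) - (mulV A (q (x (k - i))) - b))‖ ≤
      ‖(mulV A (q (x k)) - b) + ∑ i ∈ Finset.Icc 1 m,
          a i • ((mulV A (q (x k)) - b) - (mulV A (q (x (k - i))) - b))‖)
    (xk1 rk1 : EuclideanSpace ℝ (Fin n))
    (hx : xk1 = q (x k) + ∑ i ∈ Finset.Icc 1 m, α i • (q (x k) - q (x (k - i))))
    (hrk1 : rk1 = mulV A xk1 - b)
    (hrk : rb (x k) ≠ 0) :
    ‖rk1‖ < ‖rb (x k)‖ := by
  have hrk1_eq : rk1 = (mulV A (q (x k)) - b) + ∑ i ∈ Finset.Icc 1 m,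
      α i • ((mulV A (q (x k)) - b) - (mulV A (q (x (k - i))) - b)) := by
    rw [hrk1, hx]
    exact (Matrix.toEuclideanLin A).map_add_sum_smul_sub_sub b _ α _ _
  calc ‖rk1‖ ≤ ‖mulV A (q (x k)) - b‖ := by
        simpa only [← hrk1_eq, Pi.zero_apply, zero_smul, Finset.sum_const_zero, add_zero]
          using hopt 0
    _ = ‖mulV H (rb (x k))‖ := by rw [hq, mulV_richardson_sub, hH, hrb]
    _ < ‖rb (x k)‖ := norm_mulV_lt_of_norm_lt_one hHnorm hrk

/-- strict decrease of the AAg classical residual when ‖H‖ < 1. -/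
theorem stmt_13 {n : ℕ} (A P : Matrix (Fin n) (Fin n) ℝ)
    (hA : IsUnit A.det) (hP : IsUnit P.det)
    (b : EuclideanSpace ℝ (Fin n))
    (q rb : EuclideanSpace ℝ (Fin n) → EuclideanSpace ℝ (Fin n))
    (hq : ∀ y, q y = y + mulV P (b - mulV A y))
    (hrb : ∀ y, rb y = mulV A y - b)
    (H : Matrix (Fin n) (Fin n) ℝ) (hH : H = 1 - A * P)
    (hHnorm : ‖H‖ < 1)
    (k m : ℕ) (hm : m ≤ k)
    (x : ℕ → EuclideanSpace ℝ (Fin n))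
    (α : ℕ → ℝ)
    (hopt : ∀ a : ℕ → ℝ,
      ‖(mulV A (q (x k)) - b) + ∑ i ∈ Finset.Icc 1 m,
          α i • ((mulV A (q (x k)) - b) - (mulV A (q (x (k - i))) - b))‖ ≤
      ‖(mulV A (q (x k)) - b) + ∑ i ∈ Finset.Icc 1 m,
          a i • ((mulV A (q (x k)) - b) - (mulV A (q (x (k - i))) - b))‖)
    (xk1 rk1 : EuclideanSpace ℝ (Fin n))
    (hx : xk1 = q (x k) + ∑ i ∈ Finset.Icc 1 m, α i • (q (x k) - q (x (k - i))))
    (hrk1 : rk1 = mulV A xk1 - b)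
    (hrk : rb (x k) ≠ 0) :
    ‖rk1‖ < ‖rb (x k)‖ :=
  stmt_13_general A P b q rb hq hrb H hH hHnorm k m x α hopt xk1 rk1 hx hrk1 hrk
end
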